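/- For k = 1 (so u is 3×3), u = u_β u_α has eigenvalues 1, e^{iφ_1}, e^{−iφ_1} with cos φ_1 = 1 − 2N/((r+1)(N−r)), where u_α and u_β are the 3×3 matrices from the element distinctness reduced dynamics. -/
import Mathlib

/-- The index set of the reduced `(2k+1)`-dimensional space; for `k = 1` it has
the three elements `(0,0), (0,1), (1,0)`. -/
def Idx (k : ℕ) := {q : Fin (k + 1) × Fin 2 // ¬((q.1 : ℕ) = k ∧ (q.2 : ℕ) = 1)}

instance (k : ℕ) : Fintype (Idx k) := Subtype.fintype _
instance (k : ℕ) : DecidableEq (Idx k) := Subtype.instDecidableEq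

/-- The matrix `u_α` (here used with `k = 1`). -/
noncomputable def uAlpha (N r k : ℕ) : Matrix (Idx k) (Idx k) ℝ :=
  fun q' q =>
    (-1 : ℝ) ^ (q.val.2 : ℕ)
        * (1 - 2 * ((k : ℝ) - (q.val.1 : ℕ)) / ((N : ℝ) - r))
        * (if q.val.1 = q'.val.1 ∧ q.val.2 = q'.val.2 then 1 else 0)
      + 2 * Real.sqrt (((k : ℝ) - (q.val.1 : ℕ)) / ((N : ℝ) - r))
          * Real.sqrt (1 - ((k : ℝ) - (q.val.1 : ℕ)) / ((N : ℝ) - r))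
          * (if q.val.1 = q'.val.1 ∧ 1 - (q.val.2 : ℕ) = (q'.val.2 : ℕ) then 1 else 0)

/-- The matrix `u_β` (here used with `k = 1`). -/
noncomputable def uBeta (r k : ℕ) : Matrix (Idx k) (Idx k) ℝ :=
  fun q' q =>
    (-1 : ℝ) ^ (q.val.2 : ℕ)
        * (1 - 2 * (((q.val.1 : ℕ) : ℝ) + (q.val.2 : ℕ)) / ((r : ℝ) + 1))
        * (if q.val.1 = q'.val.1 ∧ q.val.2 = q'.val.2 then 1 else 0)
      + 2 * Real.sqrt ((((q.val.1 : ℕ) : ℝ) + (q.val.2 : ℕ)) / ((r : ℝ) + 1))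
          * Real.sqrt (1 - (((q.val.1 : ℕ) : ℝ) + (q.val.2 : ℕ)) / ((r : ℝ) + 1))
          * (if ((q.val.1 : ℕ) : ℤ) - (-1 : ℤ) ^ (q.val.2 : ℕ) = ((q'.val.1 : ℕ) : ℤ)
                ∧ 1 - (q.val.2 : ℕ) = (q'.val.2 : ℕ) then 1 else 0)

def tripl : Fin 3 → Idx 1 := ![⟨(0,0), by decide⟩, ⟨(0,1), by decide⟩, ⟨(1,0), by decide⟩]

def eIdx : Idx 1 ≃ Fin 3 where
  toFun q := if q.val = (0,0) then 0 else if q.val = (0,1) then 1 else 2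
  invFun := tripl
  left_inv := by decide
  right_inv := by decide

lemma spec3 (c sa d sb x : ℝ) (h1 : sa^2 = 1 - c^2) (h2 : sb^2 = 1 - d^2)
    (h4 : 2*x = c + d*c + d - 1) (hx1 : -1 ≤ x) (hx2 : x ≤ 1) :
    spectrum ℂ ((!![(1:ℝ),0,0;0,-d,sb;0,sb,d]).map Complex.ofReal
        * (!![c,sa,0;sa,-c,0;0,0,(1:ℝ)]).map Complex.ofReal)
      = {1, Complex.exp ((Real.arccos x : ℝ) * Complex.I),
          Complex.exp (-(Real.arccos x : ℝ) * Complex.I)} := by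
  have hS0 : (0:ℝ) ≤ 1 - x^2 := by nlinarith
  set S := Real.sqrt (1 - x^2) with hSdef
  have h3 : S^2 = 1 - x^2 := Real.sq_sqrt hS0
  have hz1 : Complex.exp ((Real.arccos x : ℝ) * Complex.I) = (x:ℂ) + (S:ℂ)*Complex.I := by
    rw [Complex.exp_mul_I, ← Complex.ofReal_cos, ← Complex.ofReal_sin,
        Real.cos_arccos hx1 hx2, Real.sin_arccos, hSdef]
  have hz2 : Complex.exp (-(Real.arccos x : ℝ) * Complex.I) = (x:ℂ) - (S:ℂ)*Complex.I := by
    rw [show (-(Real.arccos x : ℝ) : ℂ) = (((-Real.arccos x : ℝ)) : ℂ) by push_cast; ring,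
        Complex.exp_mul_I, ← Complex.ofReal_cos, ← Complex.ofReal_sin,
        Real.cos_neg, Real.sin_neg, Real.cos_arccos hx1 hx2, Real.sin_arccos, hSdef]
    push_cast; ring
  have h1' : (sa:ℂ)^2 = 1 - (c:ℂ)^2 := by exact_mod_cast congrArg (Complex.ofReal) h1
  have h2' : (sb:ℂ)^2 = 1 - (d:ℂ)^2 := by exact_mod_cast congrArg (Complex.ofReal) h2
  have h3' : (S:ℂ)^2 = 1 - (x:ℂ)^2 := by exact_mod_cast congrArg (Complex.ofReal) h3
  have h4' : 2*(x:ℂ) = c + d*c + d - 1 := by exact_mod_cast congrArg (Complex.ofReal) h4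
  have hI : Complex.I^2 = -1 := Complex.I_sq
  have key : ∀ μ : ℂ, (algebraMap ℂ (Matrix (Fin 3) (Fin 3) ℂ) μ -
      (!![(1:ℝ),0,0;0,-d,sb;0,sb,d]).map Complex.ofReal
        * (!![c,sa,0;sa,-c,0;0,0,(1:ℝ)]).map Complex.ofReal).det
      = (μ - 1) * (μ - ((x:ℂ) + S*Complex.I)) * (μ - ((x:ℂ) - S*Complex.I)) := by
    intro μ
    rw [Matrix.det_fin_three]
    simp [Matrix.mul_apply, Fin.sum_univ_three, Matrix.algebraMap_matrix_apply, Matrix.sub_apply]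
    linear_combination ((d:ℂ)*(μ-(d:ℂ)) - (1-(d:ℂ)^2)) * h1'
      + ((c:ℂ)*(μ-(c:ℂ)) - (sa:ℂ)^2) * h2'
      + (-(μ-1)) * h3' + ((μ-1)*μ) * h4' + ((μ-1)*(S:ℂ)^2) * hI
  ext μ
  rw [spectrum.mem_iff, Matrix.isUnit_iff_isUnit_det, isUnit_iff_ne_zero, not_ne_iff, key μ,
      hz1, hz2]
  simp only [Set.mem_insert_iff, Set.mem_singleton_iff, mul_eq_zero, sub_eq_zero]
  tauto

lemma alpha_submatrix (N r : ℕ) :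
    (uAlpha N r 1).submatrix eIdx.symm eIdx.symm
      = !![1 - 2/((N:ℝ)-r), 2*Real.sqrt (1/((N:ℝ)-r))*Real.sqrt (1-1/((N:ℝ)-r)), 0;
           2*Real.sqrt (1/((N:ℝ)-r))*Real.sqrt (1-1/((N:ℝ)-r)), -(1 - 2/((N:ℝ)-r)), 0;
           0, 0, (1:ℝ)] := by
  ext i j
  fin_cases i <;> fin_cases j <;>
    simp [uAlpha, eIdx, tripl, Matrix.submatrix_apply, Matrix.vecHead, Matrix.vecTail]

lemma beta_submatrix (r : ℕ) :
    (uBeta r 1).submatrix eIdx.symm eIdx.symm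
      = !![(1:ℝ), 0, 0;
           0, -(1 - 2/((r:ℝ)+1)), 2*Real.sqrt (1/((r:ℝ)+1))*Real.sqrt (1-1/((r:ℝ)+1));
           0, 2*Real.sqrt (1/((r:ℝ)+1))*Real.sqrt (1-1/((r:ℝ)+1)), 1 - 2/((r:ℝ)+1)] := by
  ext i j
  fin_cases i <;> fin_cases j <;>
    simp [uBeta, eIdx, tripl, Matrix.submatrix_apply, Matrix.vecHead, Matrix.vecTail]

/-- For `k = 1` the `3×3` matrix `u = u_β u_α` has eigenvalues
`1, e^{iφ₁}, e^{-iφ₁}` with `cos φ₁ = 1 - 2N/((r+1)(N-r))`. -/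
theorem stmt15 (N r : ℕ) (hr : 1 ≤ r) (hNr : 1 < N - r) :
    ∃ φ : ℝ,
      Real.cos φ = 1 - 2 * (N : ℝ) / (((r : ℝ) + 1) * ((N : ℝ) - r)) ∧
      spectrum ℂ ((uBeta r 1).map Complex.ofReal * (uAlpha N r 1).map Complex.ofReal)
        = {1, Complex.exp (φ * Complex.I), Complex.exp (-φ * Complex.I)} := by
  have hrN : r < N := by omega
  have hm2 : (2:ℝ) ≤ (N:ℝ) - r := by
    have h2 : (2:ℕ) ≤ N - r := hNr
    have : ((2:ℕ):ℝ) ≤ ((N - r : ℕ):ℝ) := by exact_mod_cast h2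
    rwa [Nat.cast_sub hrN.le, Nat.cast_ofNat] at this
  have hr1 : (1:ℝ) ≤ r := by exact_mod_cast hr
  have hm0 : (0:ℝ) < (N:ℝ) - r := by linarith
  have hNpos : (0:ℝ) ≤ (N:ℝ) := Nat.cast_nonneg N
  have hD : (0:ℝ) < ((r:ℝ)+1)*((N:ℝ)-r) := by nlinarith
  set x : ℝ := 1 - 2 * (N : ℝ) / (((r : ℝ) + 1) * ((N : ℝ) - r)) with hxdef
  have hx2 : x ≤ 1 := by
    have : 0 ≤ 2 * (N:ℝ) / (((r:ℝ)+1)*((N:ℝ)-r)) := by positivity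
    simp only [hxdef]; linarith
  have hx1 : -1 ≤ x := by
    have hle : 2 * (N:ℝ) / (((r:ℝ)+1)*((N:ℝ)-r)) ≤ 2 := by
      rw [div_le_iff₀ hD]; nlinarith
    simp only [hxdef]; linarith
  refine ⟨Real.arccos x, Real.cos_arccos hx1 hx2, ?_⟩
  -- nonnegativity facts for the sqrt arguments
  have hp0 : (0:ℝ) ≤ 1/((N:ℝ)-r) := by positivity
  have hp1 : (0:ℝ) ≤ 1 - 1/((N:ℝ)-r) := by
    have : 1/((N:ℝ)-r) ≤ 1 := by rw [div_le_one hm0]; linarith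
    linarith
  have hq0 : (0:ℝ) ≤ 1/((r:ℝ)+1) := by positivity
  have hq1 : (0:ℝ) ≤ 1 - 1/((r:ℝ)+1) := by
    have : 1/((r:ℝ)+1) ≤ 1 := by rw [div_le_one (by linarith)]; linarith
    linarith
  have h1 : (2*Real.sqrt (1/((N:ℝ)-r))*Real.sqrt (1-1/((N:ℝ)-r)))^2
      = 1 - (1 - 2/((N:ℝ)-r))^2 := by
    rw [mul_pow, mul_pow, Real.sq_sqrt hp0, Real.sq_sqrt hp1]
    field_simp
    ring
  have h2 : (2*Real.sqrt (1/((r:ℝ)+1))*Real.sqrt (1-1/((r:ℝ)+1)))^2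
      = 1 - (1 - 2/((r:ℝ)+1))^2 := by
    rw [mul_pow, mul_pow, Real.sq_sqrt hq0, Real.sq_sqrt hq1]
    field_simp
    ring
  have h4 : 2*x = (1 - 2/((N:ℝ)-r)) + (1 - 2/((r:ℝ)+1))*(1 - 2/((N:ℝ)-r))
      + (1 - 2/((r:ℝ)+1)) - 1 := by
    simp only [hxdef]
    field_simp
    ring
  have hspec := AlgEquiv.spectrum_eq (Matrix.reindexAlgEquiv ℂ ℂ eIdx)
      ((uBeta r 1).map Complex.ofReal * (uAlpha N r 1).map Complex.ofReal)
  rw [← hspec, map_mul, Matrix.reindexAlgEquiv_apply, Matrix.reindexAlgEquiv_apply,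
      Matrix.reindex_apply, Matrix.reindex_apply, Matrix.submatrix_map, Matrix.submatrix_map,
      alpha_submatrix, beta_submatrix]
  exact spec3 _ _ _ _ x h1 h2 h4 hx1 hx2
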